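/- Pigeonhole lemma for windows: let G be a finite directed graph with N vertices and integer edge weights, and suppose ρ is a finite path in G of length N·ℓ that contains no open window of length ℓ (i.e., for every position i in ρ with at least ℓ remaining steps, there exists 1 ≤ j ≤ ℓ such that the total payoff from i over j steps is nonnegative, and moreover every window in ρ closes within ℓ steps). Then ρ contains a cycle, i.e., there are two positions p < q in ρ with ρ_p = ρ_q, such that at both positions all previously opened windows are closed. -/
import Mathlib


/-- Total payoff of the segment of path `ρ` from position `i` to position `m`. -/
def TPseg {V : Type*} (w : V → V → ℤ) (ρ : ℕ → V) (i m : ℕ) : ℤ :=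
  ∑ k ∈ Finset.Ico i m, w (ρ k) (ρ (k + 1))

/-- Position `m` is window-closed: no window is open at `m`. -/
def WindowClosedAt {V : Type*} (w : V → V → ℤ) (ρ : ℕ → V) (m : ℕ) : Prop :=
  ∀ i < m, ∃ k, i < k ∧ k ≤ m ∧ 0 ≤ TPseg w ρ i k

lemma TPseg_add {V : Type*} (w : V → V → ℤ) (ρ : ℕ → V) {i k m : ℕ}
    (h1 : i ≤ k) (h2 : k ≤ m) :
    TPseg w ρ i k + TPseg w ρ k m = TPseg w ρ i m := by
  unfold TPseg
  exact Finset.sum_Ico_consecutive _ h1 h2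

lemma step_lemma {V : Type*} (w : V → V → ℤ) (ρ : ℕ → V) (N ℓ : ℕ)
    (hclose : ∀ i < N * ℓ,
      ∃ j, 1 ≤ j ∧ j ≤ ℓ ∧ i + j ≤ N * ℓ ∧ 0 ≤ TPseg w ρ i (i + j))
    (m : ℕ) (hm : WindowClosedAt w ρ m) (hmN : m < N * ℓ) :
    ∃ m', m < m' ∧ m' ≤ m + ℓ ∧ m' ≤ N * ℓ ∧ WindowClosedAt w ρ m' := by
  have hex := hclose m hmN
  classical
  have hspec := Nat.find_spec hex
  obtain ⟨hj1, hjℓ, hjN, hjTP⟩ := hspec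
  refine ⟨m + Nat.find hex, by omega, by omega, hjN, ?_⟩
  intro i hi
  rcases lt_trichotomy i m with h | h | h
  · obtain ⟨k, hk1, hk2, hk3⟩ := hm i h
    exact ⟨k, hk1, by omega, hk3⟩
  · subst h
    exact ⟨i + Nat.find hex, by omega, le_refl _, hjTP⟩
  · refine ⟨m + Nat.find hex, hi, le_refl _, ?_⟩
    have him : m + (i - m) = i := by omega
    have hneg : TPseg w ρ m i < 0 := by
      by_contra hge
      push_neg at hge
      exact Nat.find_min hex (show i - m < Nat.find hex by omega)
        ⟨by omega, by omega, by omega, by rw [him]; exact hge⟩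
    have hadd := TPseg_add w ρ (le_of_lt h) (le_of_lt hi)
    linarith

/-- Pigeonhole lemma for windows: a path of length `N·ℓ` in a graph with `N` vertices,
in which every window closes within `ℓ` steps, contains two window-closed positions
carrying the same vertex. -/
theorem stmt_9 {V : Type*} [Fintype V] (w : V → V → ℤ) (ρ : ℕ → V)
    (N ℓ : ℕ) (hℓ : 1 ≤ ℓ) (hN : N = Fintype.card V) (hN1 : 1 ≤ N)
    (hclose : ∀ i < N * ℓ,
      ∃ j, 1 ≤ j ∧ j ≤ ℓ ∧ i + j ≤ N * ℓ ∧ 0 ≤ TPseg w ρ i (i + j)) :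
    ∃ p q, p < q ∧ q ≤ N * ℓ ∧ ρ p = ρ q ∧
      WindowClosedAt w ρ p ∧ WindowClosedAt w ρ q := by
  classical
  -- choice function for the next window-closed position
  have hstep : ∀ m, ∃ m', WindowClosedAt w ρ m → m < N * ℓ →
      (m < m' ∧ m' ≤ m + ℓ ∧ m' ≤ N * ℓ ∧ WindowClosedAt w ρ m') := by
    intro m
    by_cases h : WindowClosedAt w ρ m ∧ m < N * ℓ
    · obtain ⟨m', hm'⟩ := step_lemma w ρ N ℓ hclose m h.1 h.2
      exact ⟨m', fun _ _ => hm'⟩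
    · exact ⟨0, fun h1 h2 => absurd ⟨h1, h2⟩ h⟩
  choose F hF using hstep
  set f : ℕ → ℕ := fun n => F^[n] 0 with hf
  have hf0 : f 0 = 0 := rfl
  have hfs : ∀ n, f (n + 1) = F (f n) := fun n => Function.iterate_succ_apply' F n 0
  -- invariant
  have hinv : ∀ n ≤ N, WindowClosedAt w ρ (f n) ∧ f n ≤ n * ℓ ∧
      (∀ k < n, f k < f (k + 1)) := by
    intro n hn
    induction n with
    | zero => exact ⟨fun i hi => absurd hi (by omega), by omega, fun k hk => absurd hk (by omega)⟩
    | succ n ih =>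
      obtain ⟨hwc, hle, hmono⟩ := ih (by omega)
      have hlt : f n < N * ℓ := by
        have h1 : (n + 1) * ℓ ≤ N * ℓ := Nat.mul_le_mul_right ℓ hn
        have h2 : (n + 1) * ℓ = n * ℓ + ℓ := by ring
        omega
      obtain ⟨h1, h2, h3, h4⟩ := hF (f n) hwc hlt
      refine ⟨by rw [hfs]; exact h4, ?_, ?_⟩
      · rw [hfs]
        have h5 : (n + 1) * ℓ = n * ℓ + ℓ := by ring
        omega
      · intro k hk
        rcases Nat.lt_or_ge k n with h | h
        · exact hmono k h
        · have : k = n := by omega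
          subst this
          rw [hfs]
          exact h1
  -- strict monotonicity on [0, N]
  have hmono : ∀ a b, a < b → b ≤ N → f a < f b := by
    intro a b hab hbN
    obtain ⟨_, _, hm⟩ := hinv b hbN
    have : ∀ d, a + d ≤ b → f a ≤ f (a + d) := by
      intro d
      induction d with
      | zero => simp
      | succ d ih =>
        intro hd
        have h1 := ih (by omega)
        have h2 := hm (a + d) (by omega)
        rw [show a + (d + 1) = a + d + 1 by omega]
        omega
    have h1 := this (b - 1 - a) (by omega)
    have h2 := hm (b - 1) (by omega)
    have hb : b - 1 + 1 = b := by omega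
    rw [hb] at h2
    have ha : a + (b - 1 - a) = b - 1 := by omega
    rw [ha] at h1
    omega
  -- pigeonhole
  have hcard : Fintype.card V < Fintype.card (Fin (N + 1)) := by
    simp [← hN]
  obtain ⟨a, b, hab, heq⟩ := Fintype.exists_ne_map_eq_of_card_lt
    (fun x : Fin (N + 1) => ρ (f x.val)) hcard
  have hboundall : ∀ n ≤ N, f n ≤ N * ℓ := by
    intro n hn
    obtain ⟨_, hle, _⟩ := hinv n hn
    have : n * ℓ ≤ N * ℓ := Nat.mul_le_mul_right ℓ hn
    omega
  rcases Nat.lt_or_ge a.val b.val with h | h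
  · refine ⟨f a.val, f b.val, hmono a.val b.val h (by omega), hboundall b.val (by omega),
      heq, (hinv a.val (by omega)).1, (hinv b.val (by omega)).1⟩
  · have h' : b.val < a.val := by
      rcases Nat.lt_or_ge b.val a.val with h2 | h2
      · exact h2
      · exact absurd (Fin.ext (by omega)) hab
    exact ⟨f b.val, f a.val, hmono b.val a.val h' (by omega), hboundall a.val (by omega),
      heq.symm, (hinv b.val (by omega)).1, (hinv a.val (by omega)).1⟩
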